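/- There are exactly 3 realizable directions for continuous embeddings R → R², namely (1,0), (0,1), (1,1); each is realized by an embedding, and (0,0) is not realizable. -/

import Mathlib

/-!
If both coordinates of an embedding `f : R → R²` were bounded, `f` would land in some
`Iic b₁ × Iic b₂`. Each `Iic b` is separable, since the points below `b` whose `[0,1)`-coordinate
is rational are countable and order-dense, hence second countable as a densely ordered space;
so `R` would be second countable. But `R` is not even separable: a countable subset of `ω₁` is
bounded, so a countable subset of `R` misses everything beyond some point.
-/

open Set Topology
noncomputable section

/-- The first uncountable ordinal ω₁. -/
def omega1 : Ordinal := Ordinal.omega 1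

/-- The closed long ray `R = W(ω₁) × [0,1)` with the lexicographic order. -/
def LongRay : Type 1 := {o : Ordinal // o < omega1} ×ₗ (Set.Ico (0:ℝ) 1)

instance : LinearOrder LongRay :=
  inferInstanceAs (LinearOrder ({o : Ordinal // o < omega1} ×ₗ (Set.Ico (0:ℝ) 1)))

/-- The order topology on the long ray. -/
instance : TopologicalSpace LongRay := Preorder.topology LongRay
instance : OrderTopology LongRay := ⟨rfl⟩

/-- The minimum point `(0,0)` of the long ray. -/
instance : Zero LongRay :=
  ⟨toLex (⟨0, Ordinal.omega_pos 1⟩, ⟨0, by constructor <;> norm_num⟩)⟩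

/-- A map `R → R` is cofinal if its image is unbounded in `R`. -/
def Cofinal (f : LongRay → LongRay) : Prop := ∀ b, ∃ x, b ≤ f x

/-- A map `R → R` is bounded if its image has an upper bound in `R`. -/
def BddMap (f : LongRay → LongRay) : Prop := ∃ b, ∀ x, f x ≤ b

open TopologicalSpace

namespace Ordinal

open Cardinal

theorem countable_Iic_of_lt_omega_one {o : Ordinal} (h : o < ω₁) : (Iic o).Countable := by
  rw [← Iio_insert]
  refine Countable.insert o ?_
  rwa [← le_aleph0_iff_set_countable, Cardinal.mk_Iio_ordinal, lift_le_aleph0, ← lt_aleph_one_iff,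
    ← lt_omega_iff_card_lt]

theorem not_countable_Iio_omega_one : ¬ (Iio ω₁).Countable := by
  rw [← le_aleph0_iff_set_countable, Cardinal.mk_Iio_ordinal, lift_le_aleph0, card_omega, not_le]
  exact aleph0_lt_aleph_one

end Ordinal

theorem countable_Iic_omega1 (a : {o : Ordinal // o < omega1}) : (Iic a).Countable :=
  (Ordinal.countable_Iic_of_lt_omega_one a.2).preimage Subtype.val_injective

theorem exists_gt_of_countable_omega1 {S : Set {o : Ordinal // o < omega1}} (hS : S.Countable) :
    ∃ a, ∀ s ∈ S, s < a := by
  by_contra! h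
  refine Ordinal.not_countable_Iio_omega_one ((hS.biUnion fun s _ =>
    Ordinal.countable_Iic_of_lt_omega_one s.2).mono fun o ho => ?_)
  obtain ⟨s, hs, hos⟩ := h ⟨o, ho⟩
  exact mem_biUnion hs (Subtype.coe_le_coe.2 hos)

namespace Prod.Lex

variable {α β : Type*}

theorem exists_snd_mem_between [LT α] [LT β] {s : Set β}
    (hs : ∀ ⦃b b' : β⦄, b < b' → ∃ c ∈ s, b < c ∧ c < b') (hs' : ∀ b : β, ∃ c ∈ s, b < c)
    {x y : α ×ₗ β} (hxy : x < y) : ∃ z : α ×ₗ β, (ofLex z).2 ∈ s ∧ x < z ∧ z < y := by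
  rcases lt_iff.1 hxy with hfst | ⟨hfst, hsnd⟩
  · obtain ⟨c, hc, hxc⟩ := hs' (ofLex x).2
    exact ⟨toLex ((ofLex x).1, c), hc, lt_iff.2 (.inr ⟨rfl, hxc⟩), lt_iff.2 (.inl hfst)⟩
  · obtain ⟨c, hc, hxc, hcy⟩ := hs hsnd
    exact ⟨toLex ((ofLex x).1, c), hc, lt_iff.2 (.inr ⟨rfl, hxc⟩), lt_iff.2 (.inr ⟨hfst, hcy⟩)⟩

theorem countable_Iic_inter_snd_mem [Preorder α] [Preorder β] {s : Set β}
    (hα : ∀ a : α, (Iic a).Countable) (hs : s.Countable) (b : α ×ₗ β) :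
    (Iic b ∩ {z | (ofLex z).2 ∈ s}).Countable :=
  (((hα (ofLex b).1).prod hs).image toLex).mono fun z hz =>
    mem_image_of_mem toLex (⟨monotone_fst z b hz.1, hz.2⟩ : ofLex z ∈ Iic (ofLex b).1 ×ˢ s)

end Prod.Lex

theorem separableSpace_of_exists_between {α : Type*} [LinearOrder α] [TopologicalSpace α]
    [OrderTopology α] {s t : Set α} [t.OrdConnected]
    (hs : ∀ ⦃a b : α⦄, a < b → ∃ c ∈ s, a < c ∧ c < b) (hts : (t ∩ s).Countable) :
    SeparableSpace t := by
  rcases subsingleton_or_nontrivial t with _ | _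
  · infer_instance
  refine ⟨Subtype.val ⁻¹' s, ?_, dense_of_exists_between fun a b hab => ?_⟩
  · exact (hts.preimage Subtype.val_injective).mono fun x hx => (⟨x.2, hx⟩ : (x : α) ∈ t ∩ s)
  · obtain ⟨c, hc, hac, hcb⟩ := hs (Subtype.coe_lt_coe.2 hab)
    exact ⟨⟨c, Set.Icc_subset t a.2 b.2 ⟨hac.le, hcb.le⟩⟩, hc, hac, hcb⟩

def ratIco : Set (Ico (0 : ℝ) 1) := Subtype.val ⁻¹' range ((↑) : ℚ → ℝ)

theorem countable_ratIco : ratIco.Countable :=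
  (countable_range _).preimage Subtype.val_injective

theorem exists_ratIco_between {b b' : Ico (0 : ℝ) 1} (h : b < b') :
    ∃ c ∈ ratIco, b < c ∧ c < b' := by
  obtain ⟨q, hbq, hqb'⟩ := exists_rat_btwn (Subtype.coe_lt_coe.2 h)
  exact ⟨⟨q, b.2.1.trans hbq.le, hqb'.trans b'.2.2⟩, ⟨q, rfl⟩, hbq, hqb'⟩

theorem exists_ratIco_gt (b : Ico (0 : ℝ) 1) : ∃ c ∈ ratIco, b < c := by
  obtain ⟨q, hbq, hq1⟩ := exists_rat_btwn b.2.2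
  exact ⟨⟨q, b.2.1.trans hbq.le, hq1⟩, ⟨q, rfl⟩, hbq⟩

namespace LongRay

instance : NoMaxOrder LongRay :=
  inferInstanceAs (NoMaxOrder ({o : Ordinal // o < omega1} ×ₗ Ico (0 : ℝ) 1))

instance : DenselyOrdered LongRay :=
  inferInstanceAs (DenselyOrdered ({o : Ordinal // o < omega1} ×ₗ Ico (0 : ℝ) 1))

theorem secondCountableTopology_Iic (b : LongRay) : SecondCountableTopology (Iic b) := by
  have : SeparableSpace (Iic b) :=
    separableSpace_of_exists_between (s := {z : LongRay | (ofLex z).2 ∈ ratIco})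
      (fun _ _ => Prod.Lex.exists_snd_mem_between (fun _ _ => exists_ratIco_between)
        exists_ratIco_gt)
      (Prod.Lex.countable_Iic_inter_snd_mem countable_Iic_omega1 countable_ratIco b)
  exact .of_separableSpace_orderTopology _

theorem not_separableSpace : ¬ SeparableSpace LongRay := by
  rintro ⟨D, hDc, hD⟩
  obtain ⟨a, ha⟩ := exists_gt_of_countable_omega1 (hDc.image fun z : LongRay => (ofLex z).1)
  obtain ⟨d, hd, hlt⟩ := hD.exists_gt (toLex (a, ⟨0, left_mem_Ico.2 one_pos⟩) : LongRay)
  exact (ha _ (mem_image_of_mem _ hd)).not_ge (Prod.Lex.monotone_fst _ _ hlt.le)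

end LongRay

theorem cofinal_fst_or_cofinal_snd {f : LongRay → LongRay × LongRay} (hf : IsEmbedding f) :
    Cofinal (fun x => (f x).1) ∨ Cofinal (fun x => (f x).2) := by
  by_contra! h
  simp only [Cofinal, not_forall, not_exists, not_le] at h
  obtain ⟨⟨b₁, hb₁⟩, ⟨b₂, hb₂⟩⟩ := h
  let g : LongRay → Iic b₁ × Iic b₂ := fun x => (⟨(f x).1, (hb₁ x).le⟩, ⟨(f x).2, (hb₂ x).le⟩)
  have hg : IsEmbedding g :=
    .of_comp (by fun_prop) (continuous_subtype_val.prodMap continuous_subtype_val) hf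
  have := LongRay.secondCountableTopology_Iic b₁
  have := LongRay.secondCountableTopology_Iic b₂
  have := hg.secondCountableTopology
  exact LongRay.not_separableSpace inferInstance

theorem cofinal_id : Cofinal id := fun b => ⟨b, le_rfl⟩

theorem not_cofinal_const (c : LongRay) : ¬ Cofinal (fun _ => c) := fun h =>
  let ⟨d, hd⟩ := exists_gt c
  let ⟨_, hdc⟩ := h d
  hdc.not_gt hd

/-- The directions realized by continuous embeddings `R → R²` are exactly
`(1,0)`, `(0,1)` and `(1,1)` (encoded by booleans: `true` = cofinal, `false` = bounded). -/
theorem directions_of_R2_knots :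
    {p : Bool × Bool | ∃ f : LongRay → LongRay × LongRay, Topology.IsEmbedding f ∧
        (p.1 = true ↔ Cofinal (fun x => (f x).1)) ∧
        (p.2 = true ↔ Cofinal (fun x => (f x).2))} =
      {(true, false), (false, true), (true, true)} := by
  ext ⟨p₁, p₂⟩
  simp only [mem_ofPred_eq, mem_insert_iff, mem_singleton_iff, Prod.mk.injEq]
  constructor
  · rintro ⟨f, hf, h₁, h₂⟩
    have := cofinal_fst_or_cofinal_snd hf
    cases p₁ <;> cases p₂ <;> simp_all
  · rintro (⟨rfl, rfl⟩ | ⟨rfl, rfl⟩ | ⟨rfl, rfl⟩)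
    · exact ⟨fun x => (x, 0), isEmbedding_prodMkLeft 0, iff_of_true rfl cofinal_id,
        iff_of_false Bool.false_ne_true (not_cofinal_const 0)⟩
    · exact ⟨fun x => (0, x), isEmbedding_prodMkRight 0,
        iff_of_false Bool.false_ne_true (not_cofinal_const 0), iff_of_true rfl cofinal_id⟩
    · exact ⟨fun x => (x, x), isEmbedding_graph continuous_id, iff_of_true rfl cofinal_id,
        iff_of_true rfl cofinal_id⟩
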